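/- Let n be even, k ≥ 2, m ≥ n, and m ≤ nk/2. Then δ(k,n,m) ≥ δ(k−2,n,m−n), where δ(k,n,m) = p(k,n,m) − p(k,n,m−1). -/

import Mathlib

/-- Number of partitions of `m` with at most `k` parts, each part at most `n`
(partitions contained in a `k × n` rectangle). -/
def p (k n m : ℕ) : ℕ :=
  Fintype.card {π : Nat.Partition m // π.parts.card ≤ k ∧ ∀ j ∈ π.parts, j ≤ n}

/-- `p` extended to integer `m`, with value `0` for negative `m`. -/
def pZ (k n : ℕ) (m : ℤ) : ℕ := if 0 ≤ m then p k n m.toNat else 0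

/-!
Let `V(k, m)` (`BinaryForm.isobaric n k m`) be the span of the monomials of degree `k` and weight `m` in the coefficients
`a₀, …, aₙ` of a binary form (the weight of `∏ aᵢ ^ dᵢ` is `∑ i dᵢ`); reading `dᵢ` as the number of
parts equal to `i` shows `dim V(k, m) = p(k, n, m)`. The derivations `E aⱼ = (n - j) aⱼ₊₁` and
`F aⱼ = j aⱼ₋₁` raise and lower the weight by one and `[E, F]` acts on `V(k, m)` as `2m - nk`, so the
usual `sl₂` argument makes `F ∘ E` injective on `V(k, m - 1)` when `2m ≤ nk`. For even `n` the
quadratic invariant `Q = ∑ (-1)ⁱ (n choose i) aᵢ aₙ₋ᵢ` is nonzero and `F Q = 0`, so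
`(x, y) ↦ (E x + Q y, F y)` embeds `V(k, m - 1) × V(k - 2, m - n)` into `V(k, m) × V(k - 2, m - n - 1)`.
-/

open MvPolynomial Module
open scoped Pointwise

section LoweringRaising

variable {K M : Type*} [Field K] [AddCommGroup M] [Module K M] {E F : M →ₗ[K] M}

/-- Stated for all eigenvalues `μ ≤ 0` of `F ∘ E` so that the induction on `s` goes through: if
`F (E p) = μ • p` with `p ∈ V s`, then `F (E (F p)) = (μ + 2 s - c) • F p` with `F p ∈ V (s - 1)`. -/
theorem eq_zero_of_lower_raise_eq_smul [LinearOrder K] [IsStrictOrderedRing K]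
    {V : ℤ → Submodule K M} {c : K} (hV : ∀ s < 0, V s = ⊥)
    (hF : ∀ s, ∀ p ∈ V s, F p ∈ V (s - 1))
    (hEF : ∀ s, ∀ p ∈ V s, E (F p) - F (E p) = (2 * s - c) • p) (s : ℤ) (hs : 2 * s < c) :
    ∀ p ∈ V s, ∀ μ ≤ (0 : K), F (E p) = μ • p → p = 0 := by
  have hneg : ∀ t < 0, ∀ p ∈ V t, p = 0 := fun t ht p hp => by simpa [hV t ht] using hp
  induction s using Int.inductionOn' (b := -1) with
  | zero => exact fun p hp _ _ _ => hneg (-1) (by norm_num) p hp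
  | pred t _ _ => exact fun p hp _ _ _ => hneg (t - 1) (by omega) p hp
  | succ t _ ih =>
    intro p hp μ hμ hFE
    push_cast at hs
    set ν := μ + (2 * ((t : K) + 1) - c)
    have hν : ν < 0 := by linarith
    have hEF' : E (F p) = ν • p := by
      have := hEF _ p hp
      push_cast at this
      rw [add_smul, ← hFE, ← this]
      abel
    have hFp : F p = 0 := by
      refine ih (by linarith) (F p) (by simpa using hF _ p hp) ν hν.le ?_
      rw [hEF', map_smul]
    have : ν • p = 0 := by rw [← hEF', hFp, map_zero]
    exact (smul_eq_zero.mp this).resolve_left hν.ne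

theorem finrank_add_finrank_le_of_lower_raise {A B C D : Submodule K M} [FiniteDimensional K C]
    [FiniteDimensional K D] {G : M →ₗ[K] M} (hE : ∀ x ∈ A, E x ∈ C) (hG : ∀ y ∈ B, G y ∈ C)
    (hF : ∀ y ∈ B, F y ∈ D) (hG_inj : Function.Injective G) (hFG : ∀ y ∈ B, F (G y) = G (F y))
    (hFE : ∀ x ∈ A, F (E x) = 0 → x = 0) :
    finrank K A + finrank K B ≤ finrank K C + finrank K D := by
  let Φ : A × B →ₗ[K] C × D :=
    ((E.restrict hE).comp (LinearMap.fst K A B) + (G.restrict hG).comp (LinearMap.snd K A B)).prod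
      ((F.restrict hF).comp (LinearMap.snd K A B))
  have hΦ : Function.Injective Φ := by
    rw [injective_iff_map_eq_zero]
    rintro ⟨⟨x, hx⟩, ⟨y, hy⟩⟩ h
    have hC : E x + G y = 0 := congrArg Subtype.val (congrArg Prod.fst h)
    have hD : F y = 0 := congrArg Subtype.val (congrArg Prod.snd h)
    have hx0 : x = 0 := hFE x hx (by simpa [hFG y hy, hD] using congrArg F hC)
    have hy0 : y = 0 := hG_inj (by simpa [hx0] using hC)
    simp [hx0, hy0]
  have : FiniteDimensional K (A × B) := .of_injective Φ hΦ
  have : FiniteDimensional K A := .of_surjective (LinearMap.fst K A B) Prod.fst_surjective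
  have : FiniteDimensional K B := .of_surjective (LinearMap.snd K A B) Prod.snd_surjective
  have := Φ.finrank_le_finrank_of_injective hΦ
  rwa [finrank_prod, finrank_prod] at this

end LoweringRaising

theorem MvPolynomial.mkDerivation_smul_X_monomial {σ R : Type*} [CommSemiring R] (w : σ → R)
    (d : σ →₀ ℕ) (r : R) :
    mkDerivation R (fun i => w i • X i) (monomial d r) = d.weight w • monomial d r := by
  rw [mkDerivation_monomial, Finsupp.weight_apply, Finsupp.sum, Finsupp.sum, Finset.sum_smul,
    Finset.smul_sum]
  refine Finset.sum_congr rfl fun i hi => ?_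
  rw [X, smul_monomial, smul_monomial, smul_eq_mul, monomial_mul,
    Finsupp.sub_add_single_one_cancel (Finsupp.mem_support_iff.mp hi), smul_monomial]
  congr 1
  simp only [nsmul_eq_mul, smul_eq_mul]
  ring

theorem Multiset.degree_toFinsupp (s : Multiset ℕ) :
    (Multiset.toFinsupp s).degree = Multiset.card s := by
  induction s using Multiset.induction_on with
  | empty => simp
  | cons a s ih => simp [← Multiset.singleton_add, ih, add_comm]

theorem Multiset.weight_toFinsupp (s : Multiset ℕ) :
    (Multiset.toFinsupp s).weight (fun i : ℕ => (i : ℤ)) = s.sum := by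
  induction s using Multiset.induction_on with
  | empty => simp
  | cons a s ih => simp [← Multiset.singleton_add, ih, Finsupp.weight_single]

theorem Finsupp.card_toMultiset_erase_zero (d : ℕ →₀ ℕ) :
    Multiset.card (toMultiset (d.erase 0)) + d 0 = d.degree := by
  rw [← Multiset.degree_toFinsupp, toMultiset_toFinsupp, ← degree_single 0 (d 0), ← map_add,
    erase_add_single]

theorem Finsupp.sum_toMultiset_erase_zero (d : ℕ →₀ ℕ) :
    ((toMultiset (d.erase 0)).sum : ℤ) = d.weight (fun i : ℕ => (i : ℤ)) := by
  rw [← Multiset.weight_toFinsupp, toMultiset_toFinsupp]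
  conv_rhs => rw [← erase_add_single 0 d]
  simp [weight_single]

namespace BinaryForm

def isobaricExponents (n k : ℕ) (m : ℤ) : Set (ℕ →₀ ℕ) :=
  {d | d.support ⊆ Finset.range (n + 1) ∧ d.degree = k ∧ d.weight (fun i : ℕ => (i : ℤ)) = m}

/-- The weight lives in `ℤ` so that, like `pZ`, the space is defined (and zero) for `m < 0`. -/
noncomputable def isobaric (n k : ℕ) (m : ℤ) : Submodule ℚ (MvPolynomial ℕ ℚ) :=
  restrictSupport ℚ (isobaricExponents n k m)

section Isobaric

variable {n k k₁ k₂ : ℕ} {m m₁ m₂ : ℤ}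

theorem isobaricExponents_eq_empty (hm : m < 0) : isobaricExponents n k m = ∅ := by
  refine Set.eq_empty_of_forall_notMem fun d hd => hm.not_ge ?_
  rw [← hd.2.2, Finsupp.weight_apply]
  exact Finsupp.sum_nonneg fun i _ => by positivity

theorem isobaricExponents_finite (n k : ℕ) (m : ℤ) : (isobaricExponents n k m).Finite := by
  refine (Finset.finite_toSet ((Finset.range (n + 1)).finsuppAntidiag k)).subset
    fun d ⟨hd, hdk, _⟩ => Finset.mem_finsuppAntidiag.2 ⟨?_, hd⟩
  rw [← hdk, Finsupp.degree_apply]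
  exact (Finset.sum_subset hd fun i _ hi => Finsupp.notMem_support_iff.1 hi).symm

theorem isobaric_eq_bot (hm : m < 0) : isobaric n k m = ⊥ := by
  rw [isobaric, isobaricExponents_eq_empty hm, eq_bot_iff]
  intro p hp
  simpa [mem_restrictSupport_iff] using hp

instance (n k : ℕ) (m : ℤ) : FiniteDimensional ℚ (isobaric n k m) :=
  have := (isobaricExponents_finite n k m).to_subtype
  .of_basis (basisRestrictSupport ℚ _)

theorem isobaricExponents_add_subset :
    isobaricExponents n k₁ m₁ + isobaricExponents n k₂ m₂ ⊆
      isobaricExponents n (k₁ + k₂) (m₁ + m₂) := by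
  rintro _ ⟨d, ⟨hd, hdk, hdm⟩, e, ⟨he, hek, hem⟩, rfl⟩
  exact ⟨Finsupp.support_add.trans (Finset.union_subset hd he), by simp [hdk, hek],
    by simp [hdm, hem]⟩

theorem mul_mem_isobaric {a b : MvPolynomial ℕ ℚ} (ha : a ∈ isobaric n k₁ m₁)
    (hb : b ∈ isobaric n k₂ m₂) : a * b ∈ isobaric n (k₁ + k₂) (m₁ + m₂) := by
  refine restrictSupport_mono ℚ isobaricExponents_add_subset ?_
  rw [restrictSupport_add]
  exact Submodule.mul_mem_mul ha hb

theorem X_mem_isobaric {i : ℕ} (hi : i ≤ n) : X i ∈ isobaric n 1 i := by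
  rw [X, isobaric, monomial_mem_restrictSupport]
  left
  refine ⟨?_, by simp, by simp [Finsupp.weight_single]⟩
  simpa [Finsupp.support_single] using hi.trans_lt n.lt_succ_self

theorem mkDerivation_mem_isobaric {f : ℕ → MvPolynomial ℕ ℚ} {δ : ℤ}
    (hf : ∀ i ≤ n, f i ∈ isobaric n 1 (i + δ)) {p : MvPolynomial ℕ ℚ} (hp : p ∈ isobaric n k m) :
    mkDerivation ℚ f p ∈ isobaric n k (m + δ) := by
  suffices isobaric n k m ≤ (isobaric n k (m + δ)).comap (mkDerivation ℚ f).toLinearMap from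
    this hp
  rw [isobaric, restrictSupport_eq_span, Submodule.span_le]
  rintro _ ⟨d, ⟨hd, hdk, hdm⟩, rfl⟩
  change mkDerivation ℚ f (monomial d 1) ∈ isobaric n k (m + δ)
  rw [mkDerivation_monomial, one_smul]
  refine Submodule.sum_mem _ fun i hi => ?_
  set d' := d - Finsupp.single i 1
  have hdi : d' + Finsupp.single i 1 = d :=
    Finsupp.sub_add_single_one_cancel (Finsupp.mem_support_iff.mp hi)
  have hk : d'.degree + 1 = k := by simpa [hdk] using congrArg Finsupp.degree hdi
  have hm : d'.weight (fun i : ℕ => (i : ℤ)) + (i + δ) = m + δ := by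
    rw [← hdm, ← hdi, map_add, Finsupp.weight_single]
    simp only [one_smul]
    ring
  have hd' : monomial d' (d i : ℚ) ∈ isobaric n d'.degree (d'.weight fun i : ℕ => (i : ℤ)) :=
    (monomial_mem_restrictSupport ℚ).2 (Or.inl ⟨Finsupp.support_tsub.trans hd, rfl, rfl⟩)
  rw [← hk, ← hm]
  exact mul_mem_isobaric hd' (hf i (Nat.lt_succ_iff.mp (Finset.mem_range.mp (hd hi))))

end Isobaric

noncomputable def raise (n : ℕ) : Derivation ℚ (MvPolynomial ℕ ℚ) (MvPolynomial ℕ ℚ) :=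
  mkDerivation ℚ fun j => ((n : ℚ) - j) • X (j + 1)

/-- At `j = 0` the truncated index `j - 1` is harmless: the coefficient `j` vanishes. -/
noncomputable def lower : Derivation ℚ (MvPolynomial ℕ ℚ) (MvPolynomial ℕ ℚ) :=
  mkDerivation ℚ fun j => (j : ℚ) • X (j - 1)

noncomputable def cartan (n : ℕ) : Derivation ℚ (MvPolynomial ℕ ℚ) (MvPolynomial ℕ ℚ) :=
  mkDerivation ℚ fun j => (2 * (j : ℚ) - n) • X j

section SL2

variable {n k : ℕ} {m : ℤ} {p : MvPolynomial ℕ ℚ}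

theorem raise_mem_isobaric (hp : p ∈ isobaric n k m) : raise n p ∈ isobaric n k (m + 1) := by
  refine mkDerivation_mem_isobaric (fun i hi => ?_) hp
  rcases hi.lt_or_eq with hi | rfl
  · exact Submodule.smul_mem _ _ (by exact_mod_cast X_mem_isobaric hi)
  · simp

theorem lower_mem_isobaric (hp : p ∈ isobaric n k m) : lower p ∈ isobaric n k (m - 1) := by
  refine mkDerivation_mem_isobaric (fun i hi => ?_) hp
  rcases i with _ | i
  · simp
  · exact Submodule.smul_mem _ _ (by simpa using X_mem_isobaric (n := n) (i := i) (by omega))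

theorem lie_raise_lower (n : ℕ) : ⁅raise n, lower⁆ = cartan n := by
  refine derivation_ext fun j => ?_
  rw [Derivation.commutator_apply]
  rcases j with _ | j
  · simp [raise, lower, cartan]
  · simp only [raise, lower, cartan, mkDerivation_X, Derivation.map_smul, Nat.cast_add,
      Nat.cast_one, add_tsub_cancel_right]
    module

theorem cartan_apply_of_mem_isobaric (hp : p ∈ isobaric n k m) :
    cartan n p = (2 * (m : ℚ) - n * k) • p := by
  suffices isobaric n k m ≤ End.eigenspace (cartan n).toLinearMap (2 * (m : ℚ) - n * k) from
    End.mem_eigenspace_iff.mp (this hp)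
  rw [isobaric, restrictSupport_eq_span, Submodule.span_le]
  rintro _ ⟨d, ⟨-, hdk, hdm⟩, rfl⟩
  rw [SetLike.mem_coe, End.mem_eigenspace_iff]
  change cartan n (monomial d 1) = _
  rw [cartan, mkDerivation_smul_X_monomial, ← hdk, ← hdm]
  congr 1
  push_cast [Finsupp.weight_apply, Finsupp.degree_apply, Finsupp.sum, Finset.mul_sum,
    ← Finset.sum_sub_distrib]
  exact Finset.sum_congr rfl fun _ _ => by push_cast [nsmul_eq_mul]; ring

theorem raise_lower_sub_lower_raise (hp : p ∈ isobaric n k m) :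
    raise n (lower p) - lower (raise n p) = (2 * (m : ℚ) - n * k) • p := by
  rw [← Derivation.commutator_apply, lie_raise_lower, cartan_apply_of_mem_isobaric hp]

end SL2

/-- The transvectant `(f, f)ₙ` of the binary form with itself; it vanishes for odd `n`. -/
noncomputable def quadraticInvariant (n : ℕ) : MvPolynomial ℕ ℚ :=
  ∑ i ∈ Finset.range (n + 1), ((-1) ^ i * n.choose i : ℚ) • (X i * X (n - i))

theorem quadraticInvariant_mem_isobaric (n : ℕ) : quadraticInvariant n ∈ isobaric n 2 n := by
  refine Submodule.sum_mem _ fun i hi => Submodule.smul_mem _ _ ?_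
  have hi : i ≤ n := Nat.lt_succ_iff.mp (Finset.mem_range.mp hi)
  simpa [hi] using mul_mem_isobaric (X_mem_isobaric hi) (X_mem_isobaric (n.sub_le i))

theorem lower_quadraticInvariant (n : ℕ) : lower (quadraticInvariant n) = 0 := by
  have hX (j : ℕ) : lower (X j) = (j : ℚ) • X (j - 1) := mkDerivation_X ℚ _ j
  simp only [quadraticInvariant, map_sum, Derivation.map_smul, Derivation.leibniz, hX, smul_add,
    Finset.sum_add_distrib]
  rw [Finset.sum_range_succ, Finset.sum_range_succ']
  simp only [Nat.sub_self, Nat.cast_zero, zero_smul, smul_zero, add_zero, ← Finset.sum_add_distrib]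
  refine Finset.sum_eq_zero fun i hi => ?_
  have hi : i < n := Finset.mem_range.mp hi
  have hc : (n.choose (i + 1) : ℚ) * (i + 1) = n.choose i * ((n - i : ℕ) : ℚ) := by
    exact_mod_cast Nat.choose_succ_right_eq n i
  rw [show n - (i + 1) = n - i - 1 by omega, Nat.add_sub_cancel]
  simp only [smul_eq_mul]
  rw [mul_smul_comm, mul_smul_comm, mul_comm (X (n - i - 1)), smul_smul, smul_smul, ← add_smul]
  refine smul_eq_zero_of_left ?_ _
  push_cast at hc ⊢
  linear_combination (-(-1) ^ i : ℚ) * hc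

theorem pderiv_zero_quadraticInvariant (n : ℕ) :
    pderiv 0 (quadraticInvariant n) = (1 + (-1) ^ n : ℚ) • X n := by
  have h (i : ℕ) (hi : i ∈ Finset.range (n + 1)) : n - i = 0 ↔ i = n := by
    rw [Finset.mem_range] at hi
    omega
  simp only [quadraticInvariant, map_sum, Derivation.map_smul, Derivation.leibniz, pderiv_X,
    Pi.single_apply, smul_eq_mul, mul_ite, mul_one, mul_zero, smul_add, smul_ite, smul_zero,
    Finset.sum_add_distrib, Finset.sum_ite_eq', Finset.mem_range, lt_add_iff_pos_left,
    Order.lt_add_one_iff, zero_le, ↓reduceIte, pow_zero, Nat.choose_zero_right, Nat.cast_one,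
    tsub_zero, one_smul, add_smul]
  rw [Finset.sum_congr rfl fun i hi => if_congr (h i hi) rfl rfl]
  simp [add_comm]

theorem quadraticInvariant_ne_zero {n : ℕ} (hn : Even n) : quadraticInvariant n ≠ 0 := by
  intro h
  have := pderiv_zero_quadraticInvariant n
  rw [h, map_zero, hn.neg_one_pow, eq_comm, smul_eq_zero] at this
  norm_num [X_ne_zero] at this

theorem toFinsupp_add_single_zero_mem_isobaricExponents {n k m : ℕ} {π : Nat.Partition m}
    (hk : π.parts.card ≤ k) (hn : ∀ j ∈ π.parts, j ≤ n) :
    Multiset.toFinsupp π.parts + Finsupp.single 0 (k - π.parts.card) ∈ isobaricExponents n k m := by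
  refine ⟨fun i hi => ?_, ?_, ?_⟩
  · rcases Finset.mem_union.mp (Finsupp.support_add hi) with hi | hi
    · simpa [Nat.lt_succ_iff] using hn i (by simpa using hi)
    · simp [Finset.mem_singleton.mp (Finsupp.support_single_subset hi)]
  · simp only [map_add, Multiset.degree_toFinsupp, Finsupp.degree_single]
    omega
  · simp only [map_add, Multiset.weight_toFinsupp, Finsupp.weight_single, π.parts_sum]
    simp

noncomputable def partitionEquivIsobaricExponents (n k m : ℕ) :
    {π : Nat.Partition m // π.parts.card ≤ k ∧ ∀ j ∈ π.parts, j ≤ n} ≃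
      isobaricExponents n k m where
  toFun π := ⟨_, toFinsupp_add_single_zero_mem_isobaricExponents π.2.1 π.2.2⟩
  invFun d := ⟨⟨Finsupp.toMultiset (d.1.erase 0), fun {i} hi => by
      simp only [Finsupp.mem_toMultiset, Finsupp.support_erase, Finset.mem_erase] at hi
      omega, by
      have := Finsupp.sum_toMultiset_erase_zero d.1
      rw [d.2.2.2] at this
      exact_mod_cast this⟩, by
    have := Finsupp.card_toMultiset_erase_zero d.1
    rw [d.2.2.1] at this
    exact Nat.le.intro this, fun j hj => by
    simp only [Finsupp.mem_toMultiset, Finsupp.support_erase, Finset.mem_erase] at hj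
    simpa [Nat.lt_succ_iff] using d.2.1 hj.2⟩
  left_inv π := by
    refine Subtype.ext (Nat.Partition.ext ?_)
    have h0 : 0 ∉ (Multiset.toFinsupp π.1.parts).support := by
      simpa using fun h => (π.1.parts_pos h).false
    change Finsupp.toMultiset (Finsupp.erase 0 _) = _
    rw [Finsupp.erase_add, Finsupp.erase_single, add_zero, Finsupp.erase_of_notMem_support h0,
      Multiset.toFinsupp_toMultiset]
  right_inv d := by
    refine Subtype.ext ?_
    have := Finsupp.card_toMultiset_erase_zero d.1
    rw [d.2.2.1] at this
    change Multiset.toFinsupp (Finsupp.toMultiset (Finsupp.erase 0 _)) +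
      Finsupp.single 0 (k - _) = _
    rw [Finsupp.toMultiset_toFinsupp,
      show k - Multiset.card (Finsupp.toMultiset (d.1.erase 0)) = d.1 0 by omega,
      Finsupp.erase_add_single]

theorem finrank_isobaric (n k : ℕ) (m : ℤ) : finrank ℚ (isobaric n k m) = pZ k n m := by
  rw [isobaric, finrank_eq_nat_card_basis (basisRestrictSupport ℚ _), pZ]
  rcases lt_or_ge m 0 with hm | hm
  · simp [isobaricExponents_eq_empty hm, hm.not_ge]
  · lift m to ℕ using hm
    rw [if_pos (Int.natCast_nonneg m), Int.toNat_natCast, p, ← Nat.card_eq_fintype_card,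
      Nat.card_congr (partitionEquivIsobaricExponents n k m)]

theorem finrank_isobaric_add_le {n k : ℕ} {m : ℤ} (hn : Even n) (hk : 2 ≤ k) (hm : 2 * m ≤ n * k) :
    finrank ℚ (isobaric n k (m - 1)) + finrank ℚ (isobaric n (k - 2) (m - n)) ≤
      finrank ℚ (isobaric n k m) + finrank ℚ (isobaric n (k - 2) (m - n - 1)) := by
  refine finrank_add_finrank_le_of_lower_raise (E := raise n) (F := lower)
    (G := LinearMap.mulLeft ℚ (quadraticInvariant n)) (fun x hx => ?_) (fun y hy => ?_)
    (fun y hy => lower_mem_isobaric hy) (mul_right_injective₀ (quadraticInvariant_ne_zero hn))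
    (fun y _ => ?_) (fun x hx hFE => ?_)
  · simpa using raise_mem_isobaric hx
  · have := mul_mem_isobaric (quadraticInvariant_mem_isobaric n) hy
    rwa [Nat.add_sub_cancel' hk, add_sub_cancel] at this
  · simp [Derivation.leibniz, lower_quadraticInvariant]
  · refine eq_zero_of_lower_raise_eq_smul (V := isobaric n k) (E := raise n) (F := lower)
      (c := n * k) (fun s => isobaric_eq_bot) (fun s p => lower_mem_isobaric)
      (fun s p hp => by simpa using raise_lower_sub_lower_raise hp) (m - 1) ?_ x hx 0 le_rfl
      (by simpa using hFE)
    have : (2 * m : ℚ) ≤ n * k := by exact_mod_cast hm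
    push_cast
    linarith

end BinaryForm

theorem delta_ge_general (n k m : ℕ) (hn : Even n) (hk : 2 ≤ k)
    (hm : 2 * m ≤ n * k) :
    (pZ (k - 2) n ((m : ℤ) - n) : ℤ) - pZ (k - 2) n ((m : ℤ) - n - 1) ≤
      (pZ k n m : ℤ) - pZ k n ((m : ℤ) - 1) := by
  have h := BinaryForm.finrank_isobaric_add_le (m := m) hn hk (by exact_mod_cast hm)
  simp only [BinaryForm.finrank_isobaric] at h
  omega

/-- If $n$ is even, $k ≥ 2$, $n ≤ m ≤ nk/2$, then
$δ(k,n,m) ≥ δ(k-2,n,m-n)$ where $δ(k,n,m) = p(k,n,m) - p(k,n,m-1)$. -/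
theorem delta_ge (n k m : ℕ) (hn : Even n) (hk : 2 ≤ k) (hnm : n ≤ m)
    (hm : 2 * m ≤ n * k) :
    (pZ (k - 2) n ((m : ℤ) - n) : ℤ) - pZ (k - 2) n ((m : ℤ) - n - 1) ≤
      (pZ k n m : ℤ) - pZ k n ((m : ℤ) - 1) :=
  delta_ge_general n k m hn hk hm
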